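/- Let k ≥ 1 and let (ζ_{n₁,…,n_k}) be a k-indexed sequence of complex numbers with |ζ_{n₁,…,n_k}| < exp(a + b₁n₁ + … + b_k n_k) for some a ∈ ℝ and b₁,…,b_k > 0. Then there exists an entire function s : ℂ^k → ℂ (holomorphic on all of ℂ^k) with s(n₁,…,n_k) = ζ_{n₁,…,n_k} for all non-negative integers n₁,…,n_k. -/

import Mathlib

/-!
Put `f_m(ξ) = exp (c (ξ - m)) · sin (2π(ξ - m)) / (2π(ξ - m))` and
`s(z) = ∑ₙ ζₙ ∏ᵢ f_{nᵢ}(zᵢ)`. Each `f_m` is entire and equals `δ_{jm}` at integers `j`, so `s`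
interpolates `ζ`, and it remains to show that the series is holomorphic. Since
`|f_m(ξ)| ≤ C exp ((2π + |c|) |ξ| - c m)`, choosing `cᵢ > bᵢ` makes the terms on a ball bounded
by a product of geometric sequences in the `nᵢ`; a uniformly summable series of holomorphic
functions of several variables is holomorphic, by the Cauchy estimate for its derivatives.
-/

open Complex Metric Set

section CauchyEstimate

variable {E F : Type*} [NormedAddCommGroup E] [NormedSpace ℂ E] [NormedAddCommGroup F]
  [NormedSpace ℂ F]

theorem norm_fderiv_le_of_forall_mem_ball_norm_le {f : E → F} {c : E} {R M : ℝ} (hR : 0 < R)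
    (hd : DifferentiableOn ℂ f (ball c R)) (hM : ∀ z ∈ ball c R, ‖f z‖ ≤ M) :
    ‖fderiv ℂ f c‖ ≤ 2 * M / R := by
  refine Complex.norm_fderiv_le_div_of_mapsTo_ball hd (fun z hz => ?_) hR
  rw [mem_closedBall, dist_eq_norm, two_mul]
  exact (norm_sub_le _ _).trans (add_le_add (hM z hz) (hM c (mem_ball_self hR)))

theorem differentiableOn_tsum_of_norm_le [CompleteSpace F] {ι : Type*} {f : ι → E → F}
    {u : ι → ℝ} {U : Set E} (hU : IsOpen U) (hu : Summable u)
    (hf : ∀ i, DifferentiableOn ℂ (f i) U) (hle : ∀ i, ∀ x ∈ U, ‖f i x‖ ≤ u i) :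
    DifferentiableOn ℂ (fun x => ∑' i, f i x) U := by
  intro x hx
  obtain ⟨ε, hε, hxU⟩ := Metric.isOpen_iff.mp hU x hx
  have hρ : 0 < ε / 2 := half_pos hε
  have hsub : ∀ y ∈ ball x (ε / 2), ball y (ε / 2) ⊆ U := fun y hy =>
    (ball_subset_ball' (by linarith [mem_ball.mp hy])).trans hxU
  have hderiv : ∀ i, ∀ y ∈ ball x (ε / 2), ‖fderiv ℂ (f i) y‖ ≤ 2 * u i / (ε / 2) :=
    fun i y hy => norm_fderiv_le_of_forall_mem_ball_norm_le hρ ((hf i).mono (hsub y hy))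
      fun z hz => hle i z (hsub y hy hz)
  refine (hasFDerivAt_tsum_of_isPreconnected ((hu.mul_left 2).div_const _) isOpen_ball
    (convex_ball x _).isPreconnected (fun i y hy => ?_) hderiv (mem_ball_self hρ)
    (.of_norm_bounded hu fun i => hle i x hx) (mem_ball_self hρ)).differentiableAt
    |>.differentiableWithinAt
  exact ((hf i).differentiableAt (hU.mem_nhds (hsub x (mem_ball_self hρ) hy))).hasFDerivAt

end CauchyEstimate

theorem summable_pi_prod_of_nonneg {ι α : Type*} [Fintype ι] {g : ι → α → ℝ}
    (hg : ∀ i j, 0 ≤ g i j) (hs : ∀ i, Summable (g i)) :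
    Summable fun n : ι → α => ∏ i, g i (n i) := by
  classical
  refine summable_of_sum_le (c := ∏ i, ∑' j, g i j)
    (fun n => Finset.prod_nonneg fun i _ => hg i (n i)) fun S => ?_
  calc ∑ n ∈ S, ∏ i, g i (n i)
      ≤ ∑ n ∈ Fintype.piFinset fun i => S.image (· i), ∏ i, g i (n i) :=
        Finset.sum_le_sum_of_subset_of_nonneg
          (fun n hn => Fintype.mem_piFinset.mpr fun i => Finset.mem_image_of_mem _ hn)
          (fun n _ _ => Finset.prod_nonneg fun i _ => hg i (n i))
    _ = ∏ i, ∑ j ∈ S.image (· i), g i j := (Finset.prod_univ_sum _ _).symm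
    _ ≤ ∏ i, ∑' j, g i j :=
        Finset.prod_le_prod (fun i _ => Finset.sum_nonneg fun j _ => hg i j)
          fun i _ => (hs i).sum_le_tsum _ fun j _ => hg i j

theorem norm_sin_le_exp_abs_im (w : ℂ) : ‖sin w‖ ≤ Real.exp |w.im| := by
  have h1 : ‖exp (-w * I)‖ ≤ Real.exp |w.im| := by
    rw [norm_exp]; exact Real.exp_le_exp.mpr (by simpa using le_abs_self w.im)
  have h2 : ‖exp (w * I)‖ ≤ Real.exp |w.im| := by
    rw [norm_exp]; exact Real.exp_le_exp.mpr (by simpa using neg_le_abs w.im)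
  calc ‖sin w‖ = ‖exp (-w * I) - exp (w * I)‖ / 2 := by
        rw [sin, norm_div, norm_mul]; simp
    _ ≤ (Real.exp |w.im| + Real.exp |w.im|) / 2 := by
        gcongr; exact (norm_sub_le _ _).trans (add_le_add h1 h2)
    _ = Real.exp |w.im| := by ring

noncomputable def sinc (w : ℂ) : ℂ := dslope sin 0 w

theorem differentiable_sinc : Differentiable ℂ sinc :=
  differentiableOn_univ.mp <| (Complex.differentiableOn_dslope Filter.univ_mem).mpr
    differentiable_sin.differentiableOn

@[simp]
theorem sinc_zero : sinc 0 = 1 := by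
  simp [sinc, dslope_same]

theorem sinc_of_ne_zero {w : ℂ} (hw : w ≠ 0) : sinc w = sin w / w := by
  simp [sinc, dslope_of_ne _ hw, slope_def_field]

theorem sinc_int_mul_pi {n : ℤ} (hn : n ≠ 0) : sinc (n * Real.pi) = 0 := by
  rw [sinc_of_ne_zero (by simp [hn, Real.pi_ne_zero]), sin_int_mul_pi, zero_div]

theorem exists_norm_sinc_le : ∃ C, 0 ≤ C ∧ ∀ w, ‖sinc w‖ ≤ C * Real.exp |w.im| := by
  obtain ⟨K, hK⟩ := (isCompact_closedBall (0 : ℂ) 1).exists_bound_of_continuousOn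
    differentiable_sinc.continuous.continuousOn
  refine ⟨max K 1, by positivity, fun w => ?_⟩
  have hexp : 1 ≤ Real.exp |w.im| := Real.one_le_exp (abs_nonneg _)
  rcases le_or_gt ‖w‖ 1 with hw | hw
  · calc ‖sinc w‖ ≤ max K 1 := (hK w (mem_closedBall_zero_iff.mpr hw)).trans (le_max_left _ _)
      _ ≤ max K 1 * Real.exp |w.im| := le_mul_of_one_le_right (by positivity) hexp
  · rw [sinc_of_ne_zero (norm_pos_iff.mp (one_pos.trans hw)), norm_div]
    calc ‖sin w‖ / ‖w‖ ≤ ‖sin w‖ := div_le_self (norm_nonneg _) hw.le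
      _ ≤ Real.exp |w.im| := norm_sin_le_exp_abs_im w
      _ ≤ max K 1 * Real.exp |w.im| := le_mul_of_one_le_left (by positivity) (le_max_right _ _)

/-- The paper's `f_m`, with `c` in place of `2π + b + ε`. -/
noncomputable def interpolationBasis (c : ℝ) (m : ℕ) (ξ : ℂ) : ℂ :=
  exp (c * (ξ - m)) * sinc (2 * Real.pi * (ξ - m))

@[fun_prop]
theorem differentiable_interpolationBasis (c : ℝ) (m : ℕ) :
    Differentiable ℂ (interpolationBasis c m) := by
  unfold interpolationBasis
  exact (differentiable_exp.comp (by fun_prop)).mul (differentiable_sinc.comp (by fun_prop))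

@[simp]
theorem interpolationBasis_self (c : ℝ) (m : ℕ) : interpolationBasis c m m = 1 := by
  simp [interpolationBasis]

theorem interpolationBasis_of_ne (c : ℝ) {m j : ℕ} (h : j ≠ m) :
    interpolationBasis c m j = 0 := by
  have hjm : (2 * ((j : ℤ) - m) : ℤ) ≠ 0 := by omega
  have := sinc_int_mul_pi hjm
  push_cast at this
  rw [interpolationBasis, show (2 * Real.pi * ((j : ℂ) - m)) = 2 * ((j : ℂ) - m) * Real.pi by ring,
    this, mul_zero]

theorem exists_norm_interpolationBasis_le :
    ∃ C, 0 ≤ C ∧ ∀ (c : ℝ) (m : ℕ) (ξ : ℂ),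
      ‖interpolationBasis c m ξ‖ ≤ C * Real.exp ((2 * Real.pi + |c|) * ‖ξ‖ - c * m) := by
  obtain ⟨C, hC0, hC⟩ := exists_norm_sinc_le
  refine ⟨C, hC0, fun c m ξ => ?_⟩
  have him : |(2 * Real.pi * (ξ - m)).im| ≤ 2 * Real.pi * ‖ξ‖ := by
    simpa [abs_mul, abs_of_pos Real.pi_pos] using
      mul_le_mul_of_nonneg_left (abs_im_le_norm ξ) Real.two_pi_pos.le
  have hre : (c * (ξ - m)).re ≤ |c| * ‖ξ‖ - c * m := by
    have : c * ξ.re ≤ |c| * ‖ξ‖ := (le_abs_self _).trans <| by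
      rw [abs_mul]; exact mul_le_mul_of_nonneg_left (abs_re_le_norm ξ) (abs_nonneg c)
    simp only [mul_re, ofReal_re, ofReal_im, sub_re, natCast_re, zero_mul, sub_zero]
    linarith
  calc ‖interpolationBasis c m ξ‖
      ≤ Real.exp (|c| * ‖ξ‖ - c * m) * (C * Real.exp (2 * Real.pi * ‖ξ‖)) := by
        rw [interpolationBasis, norm_mul, norm_exp]
        gcongr
        exact (hC _).trans (by gcongr)
    _ = C * Real.exp ((2 * Real.pi + |c|) * ‖ξ‖ - c * m) := by
        rw [mul_left_comm, ← Real.exp_add]; ring_nf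

section Interpolant

variable {ι : Type*} [Fintype ι]

noncomputable def sincInterpolant (c : ι → ℝ) (ζ : (ι → ℕ) → ℂ) (z : ι → ℂ) : ℂ :=
  ∑' n : ι → ℕ, ζ n * ∏ i, interpolationBasis (c i) (n i) (z i)

theorem sincInterpolant_natCast (c : ι → ℝ) (ζ : (ι → ℕ) → ℂ) (n : ι → ℕ) :
    sincInterpolant c ζ (fun i => n i) = ζ n := by
  rw [sincInterpolant, tsum_eq_single n fun m hm => ?_]
  · simp
  obtain ⟨i, hi⟩ := Function.ne_iff.mp hm
  rw [Finset.prod_eq_zero (Finset.mem_univ i) (interpolationBasis_of_ne _ (Ne.symm hi)), mul_zero]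

theorem differentiable_sincInterpolant {ζ : (ι → ℕ) → ℂ} {a : ℝ} {b c : ι → ℝ}
    (hbc : ∀ i, b i < c i) (hζ : ∀ n, ‖ζ n‖ ≤ Real.exp (a + ∑ i, b i * n i)) :
    Differentiable ℂ (sincInterpolant c ζ) := by
  obtain ⟨C, hC0, hC⟩ := exists_norm_interpolationBasis_le
  intro x
  set r := ‖x‖ + 1
  set g : ι → ℕ → ℝ := fun i m =>
    C * Real.exp ((2 * Real.pi + |c i|) * r) * Real.exp (-(c i - b i)) ^ m
  have hfactor : ∀ i (m : ℕ), Real.exp (b i * m) *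
      (C * Real.exp ((2 * Real.pi + |c i|) * r - c i * m)) = g i m := by
    intro i m
    simp only [g]
    rw [← Real.exp_nat_mul, mul_left_comm, ← Real.exp_add, mul_assoc, ← Real.exp_add]
    ring_nf
  have hu : Summable fun n : ι → ℕ => Real.exp a * ∏ i, g i (n i) := by
    refine (summable_pi_prod_of_nonneg (fun i m => by positivity) fun i => ?_).mul_left _
    exact (summable_geometric_of_lt_one (Real.exp_pos _).le
      (Real.exp_lt_one_iff.mpr (by linarith [hbc i]))).mul_left _
  have hle : ∀ n, ∀ z ∈ ball (0 : ι → ℂ) r,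
      ‖ζ n * ∏ i, interpolationBasis (c i) (n i) (z i)‖ ≤ Real.exp a * ∏ i, g i (n i) := by
    intro n z hz
    have hzi : ∀ i, ‖z i‖ ≤ r := fun i => (norm_le_pi_norm z i).trans (mem_ball_zero_iff.mp hz).le
    calc ‖ζ n * ∏ i, interpolationBasis (c i) (n i) (z i)‖
        = ‖ζ n‖ * ∏ i, ‖interpolationBasis (c i) (n i) (z i)‖ := by rw [norm_mul, norm_prod]
      _ ≤ Real.exp (a + ∑ i, b i * n i) *
          ∏ i, C * Real.exp ((2 * Real.pi + |c i|) * r - c i * n i) := by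
        gcongr with i
        · exact hζ n
        · exact (hC _ _ _).trans (by gcongr; exact hzi i)
      _ = Real.exp a * ∏ i, g i (n i) := by
        rw [Real.exp_add, Real.exp_sum, mul_assoc, ← Finset.prod_mul_distrib]
        simp only [hfactor]
  refine (differentiableOn_tsum_of_norm_le isOpen_ball hu (fun n => ?_) hle).differentiableAt
    (isOpen_ball.mem_nhds (by simp [r]))
  exact Differentiable.differentiableOn (by fun_prop)

end Interpolant

theorem exists_entire_interpolant_multi_general (k : ℕ)
    (ζ : (Fin k → ℕ) → ℂ) (a : ℝ) (b : Fin k → ℝ)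
    (hζ : ∀ n : Fin k → ℕ, ‖ζ n‖ < Real.exp (a + ∑ i, b i * n i)) :
    ∃ s : (Fin k → ℂ) → ℂ, Differentiable ℂ s ∧
      ∀ n : Fin k → ℕ, s (fun i => (n i : ℂ)) = ζ n :=
  ⟨sincInterpolant (fun i => b i + 1) ζ,
    differentiable_sincInterpolant (fun i => lt_add_one (b i)) fun n => (hζ n).le,
    sincInterpolant_natCast _ ζ⟩

theorem exists_entire_interpolant_multi (k : ℕ) (hk : 1 ≤ k)
    (ζ : (Fin k → ℕ) → ℂ) (a : ℝ) (b : Fin k → ℝ) (hb : ∀ i, 0 < b i)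
    (hζ : ∀ n : Fin k → ℕ, ‖ζ n‖ < Real.exp (a + ∑ i, b i * n i)) :
    ∃ s : (Fin k → ℂ) → ℂ, Differentiable ℂ s ∧
      ∀ n : Fin k → ℕ, s (fun i => (n i : ℂ)) = ζ n :=
  exists_entire_interpolant_multi_general k ζ a b hζ
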